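/- If each Hagedorn wave packet φ_𝐧(t,·) satisfies iε ∂_t φ_𝐧 = Ĥ φ_𝐧 + ε^{3/2} α(t,·) φ_𝐧 and the raising operator satisfies iε(d/dt)𝒜*_j(t) + [𝒜*_j(t), Ĥ] = (ε²/√2) Q^*_{jk}(t) ∂_{x_k} α(t,·), then φ_{𝐧+e_j}(t,·) := (n_j+1)^{-1/2} 𝒜*_j(t) φ_𝐧(t,·) satisfies iε ∂_t φ_{𝐧+e_j} = Ĥ φ_{𝐧+e_j} + ε^{3/2} α(t,·) φ_{𝐧+e_j}. -/

import Mathlib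

open scoped Matrix BigOperators

noncomputable section

/-- The momentum operator `p̂_j = -iε ∂/∂x_j`. -/
def momOp (ε : ℝ) {d : ℕ} (j : Fin d) (f : EuclideanSpace ℝ (Fin d) → ℂ) :
    EuclideanSpace ℝ (Fin d) → ℂ :=
  fun x => -Complex.I * ε * fderiv ℝ f x (EuclideanSpace.single j 1)

/-- The raising operator `𝒜*_j`. -/
def raiseOp (ε : ℝ) {d : ℕ} (q p : Fin d → ℝ) (Q P : Matrix (Fin d) (Fin d) ℂ)
    (j : Fin d) (f : EuclideanSpace ℝ (Fin d) → ℂ) : EuclideanSpace ℝ (Fin d) → ℂ :=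
  fun x => (Complex.I / (Real.sqrt (2 * ε) : ℂ)) *
    (∑ k, (starRingEnd ℂ) (P k j) * ((x k - q k : ℝ) : ℂ) * f x
      - ∑ k, (starRingEnd ℂ) (Q k j) * (momOp ε k f x - (p k : ℂ) * f x))

/-- The Schrödinger operator `Ĥ = −(ε²/2)Δ + V`. -/
def Hop (ε : ℝ) {d : ℕ} (V : EuclideanSpace ℝ (Fin d) → ℝ)
    (f : EuclideanSpace ℝ (Fin d) → ℂ) : EuclideanSpace ℝ (Fin d) → ℂ :=
  fun x => -(ε ^ 2 / 2 : ℂ) * ∑ j, iteratedFDeriv ℝ 2 f x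
      ![EuclideanSpace.single j 1, EuclideanSpace.single j 1]
    + (V x : ℂ) * f x

namespace HagAux0

variable {X Y : Type*} [NormedAddCommGroup X] [NormedSpace ℝ X]
  [NormedAddCommGroup Y] [NormedSpace ℝ Y]

lemma hasDerivAt_slice {F : ℝ × X → Y} (hF : Differentiable ℝ F) (t : ℝ) (y : X) :
    HasDerivAt (fun s => F (s, y)) (fderiv ℝ F (t, y) (1, 0)) t := by
  have h1 : HasDerivAt (fun s : ℝ => (s, y)) ((1 : ℝ), (0 : X)) t :=
    (hasDerivAt_id t).prodMk (hasDerivAt_const t y)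
  exact (hF (t, y)).hasFDerivAt.comp_hasDerivAt t h1

lemma hasFDerivAt_slice {F : ℝ × X → Y} (hF : Differentiable ℝ F) (s : ℝ) (x : X) :
    HasFDerivAt (fun y => F (s, y))
      ((fderiv ℝ F (s, x)).comp (ContinuousLinearMap.inr ℝ ℝ X)) x :=
  (hF (s, x)).hasFDerivAt.comp x (hasFDerivAt_prodMk_right s x)

lemma fderiv_slice {F : ℝ × X → Y} (hF : Differentiable ℝ F) (s : ℝ) (x : X) (v : X) :
    fderiv ℝ (fun y => F (s, y)) x v = fderiv ℝ F (s, x) (0, v) := by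
  rw [(hasFDerivAt_slice hF s x).fderiv]; rfl

/-- mixed partials swap, packaged as a `HasDerivAt`. -/
lemma hasDerivAt_fderiv_swap {F : ℝ × X → Y} (hF : ContDiff ℝ (⊤ : ℕ∞) F)
    (t : ℝ) (x : X) (v : X) :
    HasDerivAt (fun s => fderiv ℝ (fun y => F (s, y)) x v)
      (fderiv ℝ (fun y => deriv (fun s => F (s, y)) t) x v) t := by
  have hFd : Differentiable ℝ F := hF.differentiable (by simp)
  set G := fderiv ℝ F with hGdef
  have hGc : ContDiff ℝ (⊤ : ℕ∞) G := hF.fderiv_right (by simp)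
  have hGd : Differentiable ℝ G := hGc.differentiable (by simp)
  have hsym := second_derivative_symmetric (f := F) (f' := G)
      (f'' := fderiv ℝ G (t, x)) (fun y => (hFd y).hasFDerivAt)
      (hGd (t, x)).hasFDerivAt
  have e1 : (fun s => fderiv ℝ (fun y => F (s, y)) x v)
      = fun s => (ContinuousLinearMap.apply ℝ Y (((0 : ℝ), v) : ℝ × X)) (G (s, x)) := by
    funext s; rw [fderiv_slice hFd s x v]; rfl
  rw [e1]
  have h2 : HasDerivAt
      (fun s => (ContinuousLinearMap.apply ℝ Y (((0 : ℝ), v) : ℝ × X)) (G (s, x)))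
      ((ContinuousLinearMap.apply ℝ Y (((0 : ℝ), v) : ℝ × X)) (fderiv ℝ G (t, x) (1, 0))) t :=
    (ContinuousLinearMap.apply ℝ Y (((0 : ℝ), v) : ℝ × X)).hasFDerivAt.comp_hasDerivAt t
      (hasDerivAt_slice hGd t x)
  have hRf : (fun y => deriv (fun s => F (s, y)) t)
      = fun y => (ContinuousLinearMap.apply ℝ Y (((1 : ℝ), (0 : X)) : ℝ × X)) (G (t, y)) := by
    funext y; rw [(hasDerivAt_slice hFd t y).deriv]; rfl
  have hR : fderiv ℝ (fun y => deriv (fun s => F (s, y)) t) x v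
      = fderiv ℝ G (t, x) (0, v) (1, 0) := by
    have h3 : HasFDerivAt
        (fun y => (ContinuousLinearMap.apply ℝ Y (((1 : ℝ), (0 : X)) : ℝ × X)) (G (t, y)))
        ((ContinuousLinearMap.apply ℝ Y (((1 : ℝ), (0 : X)) : ℝ × X)).comp
          ((fderiv ℝ G (t, x)).comp (ContinuousLinearMap.inr ℝ ℝ X))) x :=
      (ContinuousLinearMap.apply ℝ Y (((1 : ℝ), (0 : X)) : ℝ × X)).hasFDerivAt.comp x
        (hasFDerivAt_slice hGd t x)
    rw [hRf, h3.fderiv]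
    rfl
  rw [hR, hsym (0, v) (1, 0)]
  exact h2


lemma differentiable_deriv_slice {F : ℝ × X → Y} (hF : ContDiff ℝ (⊤ : ℕ∞) F) (t : ℝ) :
    Differentiable ℝ (fun y => deriv (fun s => F (s, y)) t) := by
  have hFd : Differentiable ℝ F := hF.differentiable (by simp)
  have hGc : ContDiff ℝ (⊤ : ℕ∞) (fderiv ℝ F) := hF.fderiv_right (by simp)
  have h : (fun y => deriv (fun s => F (s, y)) t)
      = fun y => (ContinuousLinearMap.apply ℝ Y (((1 : ℝ), (0 : X)) : ℝ × X)) (fderiv ℝ F (t, y)) := by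
    funext y; rw [(hasDerivAt_slice hFd t y).deriv]; rfl
  rw [h]
  exact (ContinuousLinearMap.apply ℝ Y (((1 : ℝ), (0 : X)) : ℝ × X)).differentiable.comp
    ((hGc.differentiable (by simp)).comp ((differentiable_const t).prodMk differentiable_id))

end HagAux0

namespace HagAux

variable {d : ℕ}

lemma raiseOp_const_mul (ε : ℝ) (q p : Fin d → ℝ) (Q P : Matrix (Fin d) (Fin d) ℂ)
    (j : Fin d) (c : ℂ) (f : EuclideanSpace ℝ (Fin d) → ℂ) (hf : Differentiable ℝ f)
    (x : EuclideanSpace ℝ (Fin d)) :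
    raiseOp ε q p Q P j (fun y => c * f y) x = c * raiseOp ε q p Q P j f x := by
  have hm : ∀ k : Fin d, momOp ε k (fun y => c * f y) x = c * momOp ε k f x := by
    intro k
    simp only [momOp, fderiv_const_mul (hf x) c, ContinuousLinearMap.smul_apply, smul_eq_mul]
    ring
  simp only [raiseOp, hm]
  rw [show (∑ k, (starRingEnd ℂ) (P k j) * ((x k - q k : ℝ) : ℂ) * (c * f x))
      = c * ∑ k, (starRingEnd ℂ) (P k j) * ((x k - q k : ℝ) : ℂ) * f x by
    rw [Finset.mul_sum]; exact Finset.sum_congr rfl fun k _ => by ring]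
  rw [show (∑ k, (starRingEnd ℂ) (Q k j) * (c * momOp ε k f x - (p k : ℂ) * (c * f x)))
      = c * ∑ k, (starRingEnd ℂ) (Q k j) * (momOp ε k f x - (p k : ℂ) * f x) by
    rw [Finset.mul_sum]; exact Finset.sum_congr rfl fun k _ => by ring]
  ring

lemma raiseOp_add (ε : ℝ) (q p : Fin d → ℝ) (Q P : Matrix (Fin d) (Fin d) ℂ)
    (j : Fin d) (f g : EuclideanSpace ℝ (Fin d) → ℂ)
    (hf : Differentiable ℝ f) (hg : Differentiable ℝ g) (x : EuclideanSpace ℝ (Fin d)) :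
    raiseOp ε q p Q P j (fun y => f y + g y) x
      = raiseOp ε q p Q P j f x + raiseOp ε q p Q P j g x := by
  have hm : ∀ k : Fin d, momOp ε k (fun y => f y + g y) x
      = momOp ε k f x + momOp ε k g x := by
    intro k
    simp only [momOp, fderiv_fun_add (hf x) (hg x), ContinuousLinearMap.add_apply]
    ring
  simp only [raiseOp, hm]
  rw [show (∑ k, (starRingEnd ℂ) (P k j) * ((x k - q k : ℝ) : ℂ) * (f x + g x))
      = (∑ k, (starRingEnd ℂ) (P k j) * ((x k - q k : ℝ) : ℂ) * f x)
        + ∑ k, (starRingEnd ℂ) (P k j) * ((x k - q k : ℝ) : ℂ) * g x by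
    rw [← Finset.sum_add_distrib]; exact Finset.sum_congr rfl fun k _ => by ring]
  rw [show (∑ k, (starRingEnd ℂ) (Q k j) *
        (momOp ε k f x + momOp ε k g x - (p k : ℂ) * (f x + g x)))
      = (∑ k, (starRingEnd ℂ) (Q k j) * (momOp ε k f x - (p k : ℂ) * f x))
        + ∑ k, (starRingEnd ℂ) (Q k j) * (momOp ε k g x - (p k : ℂ) * g x) by
    rw [← Finset.sum_add_distrib]; exact Finset.sum_congr rfl fun k _ => by ring]
  ring

lemma raiseOp_mul (ε : ℝ) (q p : Fin d → ℝ) (Q P : Matrix (Fin d) (Fin d) ℂ)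
    (j : Fin d) (a f : EuclideanSpace ℝ (Fin d) → ℂ)
    (ha : Differentiable ℝ a) (hf : Differentiable ℝ f) (x : EuclideanSpace ℝ (Fin d)) :
    raiseOp ε q p Q P j (fun y => a y * f y) x
      = a x * raiseOp ε q p Q P j f x
        + (Complex.I / (Real.sqrt (2 * ε) : ℂ)) * (Complex.I * ε) *
          ((∑ k, (starRingEnd ℂ) (Q k j) * fderiv ℝ a x (EuclideanSpace.single k 1)) * f x) := by
  have hm : ∀ k : Fin d, momOp ε k (fun y => a y * f y) x
      = a x * momOp ε k f x
        + -Complex.I * ε * fderiv ℝ a x (EuclideanSpace.single k 1) * f x := by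
    intro k
    simp only [momOp, fderiv_fun_mul (ha x) (hf x), ContinuousLinearMap.add_apply,
      ContinuousLinearMap.smul_apply, smul_eq_mul]
    ring
  simp only [raiseOp, hm]
  rw [show (∑ k, (starRingEnd ℂ) (P k j) * ((x k - q k : ℝ) : ℂ) * (a x * f x))
      = a x * ∑ k, (starRingEnd ℂ) (P k j) * ((x k - q k : ℝ) : ℂ) * f x by
    rw [Finset.mul_sum]; exact Finset.sum_congr rfl fun k _ => by ring]
  rw [show (∑ k, (starRingEnd ℂ) (Q k j) *
        (a x * momOp ε k f x
          + -Complex.I * ε * fderiv ℝ a x (EuclideanSpace.single k 1) * f x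
          - (p k : ℂ) * (a x * f x)))
      = a x * (∑ k, (starRingEnd ℂ) (Q k j) * (momOp ε k f x - (p k : ℂ) * f x))
        + (-Complex.I * ε) *
          ((∑ k, (starRingEnd ℂ) (Q k j) * fderiv ℝ a x (EuclideanSpace.single k 1)) * f x) by
    rw [Finset.mul_sum, Finset.sum_mul, Finset.mul_sum, ← Finset.sum_add_distrib]
    exact Finset.sum_congr rfl fun k _ => by ring]
  ring

lemma Hop_contDiff (ε : ℝ) (V : EuclideanSpace ℝ (Fin d) → ℝ) (hV : ContDiff ℝ (⊤ : ℕ∞) V)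
    (f : EuclideanSpace ℝ (Fin d) → ℂ) (hf : ContDiff ℝ (⊤ : ℕ∞) f) :
    ContDiff ℝ (⊤ : ℕ∞) (Hop ε V f) := by
  unfold Hop
  refine ContDiff.add (ContDiff.mul contDiff_const (ContDiff.sum fun i _ => ?_))
    ((Complex.ofRealCLM.contDiff.comp hV).mul hf)
  exact (ContinuousMultilinearMap.apply ℝ (fun _ : Fin 2 => EuclideanSpace ℝ (Fin d)) ℂ
      ![EuclideanSpace.single i 1, EuclideanSpace.single i 1]).contDiff.comp
    (hf.iteratedFDeriv_right (by exact le_of_eq (by rw [← WithTop.coe_natCast, ← WithTop.coe_add, top_add])))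

lemma Hop_const_mul (ε : ℝ) (V : EuclideanSpace ℝ (Fin d) → ℝ) (c : ℂ)
    (f : EuclideanSpace ℝ (Fin d) → ℂ) (hf : ContDiff ℝ (⊤ : ℕ∞) f) (x : EuclideanSpace ℝ (Fin d)) :
    Hop ε V (fun y => c * f y) x = c * Hop ε V f x := by
  have h2 : ∀ i : Fin d, iteratedFDeriv ℝ 2 (fun y => c * f y) x
        ![EuclideanSpace.single i 1, EuclideanSpace.single i 1]
      = c * iteratedFDeriv ℝ 2 f x
        ![EuclideanSpace.single i 1, EuclideanSpace.single i 1] := by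
    intro i
    have hcf : (fun y => c * f y) = c • f := rfl
    rw [hcf, iteratedFDeriv_const_smul_apply (hf.of_le (by exact WithTop.coe_le_coe.mpr (le_top : (2:ℕ∞) ≤ ⊤))).contDiffAt]
    simp
  simp only [Hop, h2, ← Finset.mul_sum]
  ring

lemma raiseOp_contDiff (ε : ℝ) (q p : Fin d → ℝ) (Q P : Matrix (Fin d) (Fin d) ℂ)
    (j : Fin d) (f : EuclideanSpace ℝ (Fin d) → ℂ) (hf : ContDiff ℝ (⊤ : ℕ∞) f) :
    ContDiff ℝ (⊤ : ℕ∞) (raiseOp ε q p Q P j f) := by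
  unfold raiseOp momOp
  refine ContDiff.mul contDiff_const (ContDiff.sub ?_ ?_)
  · refine ContDiff.sum fun k _ => ContDiff.mul (ContDiff.mul contDiff_const ?_) hf
    exact Complex.ofRealCLM.contDiff.comp
      (((EuclideanSpace.proj k : EuclideanSpace ℝ (Fin d) →L[ℝ] ℝ).contDiff).sub contDiff_const)
  · refine ContDiff.sum fun k _ => ContDiff.mul contDiff_const
      (ContDiff.sub (ContDiff.mul contDiff_const ?_) (ContDiff.mul contDiff_const hf))
    exact (ContinuousLinearMap.apply ℝ ℂ (EuclideanSpace.single k 1)).contDiff.comp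
      (hf.fderiv_right (m := ((⊤ : ℕ∞) : WithTop ℕ∞)) (by exact_mod_cast (le_top : (⊤:ℕ∞)+1 ≤ ⊤)))

end HagAux

/-- inductive step of Proposition 3.1: if `φ_𝐧` satisfies
`iε ∂_t φ_𝐧 = Ĥφ_𝐧 + ε^{3/2} α φ_𝐧` and the raising operator satisfies
`iε (d/dt)𝒜*_j + [𝒜*_j, Ĥ] = (ε²/√2) Q^*_{jk} ∂_{x_k} α`, then
`φ_{𝐧+e_j} = (n_j+1)^{-1/2} 𝒜*_j φ_𝐧` satisfies the same perturbed Schrödinger equation. -/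
theorem hagedorn_inductive_step (d : ℕ) (ε : ℝ) (hε : 0 < ε)
    (V : EuclideanSpace ℝ (Fin d) → ℝ) (hVsm : ContDiff ℝ (⊤ : ℕ∞) V)
    (q p : ℝ → EuclideanSpace ℝ (Fin d)) (Q P : ℝ → Matrix (Fin d) (Fin d) ℂ)
    (hqs : ∀ i : Fin d, ContDiff ℝ (⊤ : ℕ∞) fun t => q t i)
    (hps : ∀ i : Fin d, ContDiff ℝ (⊤ : ℕ∞) fun t => p t i)
    (hQs : ∀ a b : Fin d, ContDiff ℝ (⊤ : ℕ∞) fun t => Q t a b)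
    (hPs : ∀ a b : Fin d, ContDiff ℝ (⊤ : ℕ∞) fun t => P t a b)
    (α : ℝ → EuclideanSpace ℝ (Fin d) → ℂ)
    (hα : ContDiff ℝ 1 fun pr : ℝ × EuclideanSpace ℝ (Fin d) => α pr.1 pr.2)
    (φ : ℝ → EuclideanSpace ℝ (Fin d) → ℂ)
    (hφreg : ContDiff ℝ (⊤ : ℕ∞) fun pr : ℝ × EuclideanSpace ℝ (Fin d) => φ pr.1 pr.2)
    (hφ : ∀ t x, Complex.I * ε * deriv (fun s => φ s x) t
      = Hop ε V (φ t) x + ((ε * Real.sqrt ε : ℝ) : ℂ) * α t x * φ t x)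
    (hA : ∀ (f : EuclideanSpace ℝ (Fin d) → ℂ), ContDiff ℝ (⊤ : ℕ∞) f →
      ∀ (t : ℝ) (j : Fin d) (x),
        Complex.I * ε * deriv (fun s => raiseOp ε (q s) (p s) (Q s) (P s) j f x) t
          + (raiseOp ε (q t) (p t) (Q t) (P t) j (Hop ε V f) x
              - Hop ε V (raiseOp ε (q t) (p t) (Q t) (P t) j f) x)
        = ((ε ^ 2 / Real.sqrt 2 : ℝ) : ℂ) *
            (∑ k, (starRingEnd ℂ) (Q t k j) *
              fderiv ℝ (α t) x (EuclideanSpace.single k 1)) * f x)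
    (n : Fin d → ℕ) (j : Fin d) :
    ∀ t x,
      Complex.I * ε * deriv (fun s => ((Real.sqrt (n j + 1) : ℝ) : ℂ)⁻¹
          * raiseOp ε (q s) (p s) (Q s) (P s) j (φ s) x) t
        = Hop ε V (fun y => ((Real.sqrt (n j + 1) : ℝ) : ℂ)⁻¹
            * raiseOp ε (q t) (p t) (Q t) (P t) j (φ t) y) x
          + ((ε * Real.sqrt ε : ℝ) : ℂ) * α t x
            * (((Real.sqrt (n j + 1) : ℝ) : ℂ)⁻¹
                * raiseOp ε (q t) (p t) (Q t) (P t) j (φ t) x) := by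
  intro t x
  have hφt : ∀ s : ℝ, ContDiff ℝ (⊤ : ℕ∞) (φ s) := fun s =>
    hφreg.comp (contDiff_const.prodMk contDiff_id)
  have hφd : ∀ s : ℝ, Differentiable ℝ (φ s) := fun s => (hφt s).differentiable (by simp)
  have hFd : Differentiable ℝ (fun pr : ℝ × EuclideanSpace ℝ (Fin d) => φ pr.1 pr.2) :=
    hφreg.differentiable (by simp)
  have hαt : Differentiable ℝ (α t) :=
    (hα.differentiable one_ne_zero).comp ((differentiable_const t).prodMk differentiable_id)
  have hψd : Differentiable ℝ (fun y => deriv (fun s => φ s y) t) :=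
    HagAux0.differentiable_deriv_slice hφreg t
  have hAt := hA (φ t) (hφt t) t j x
  have hnum : ((ε * Real.sqrt ε : ℝ) : ℂ) *
      (Complex.I / (Real.sqrt (2 * ε) : ℂ) * (Complex.I * ε))
      = -((ε ^ 2 / Real.sqrt 2 : ℝ) : ℂ) := by
    have h2ε : Real.sqrt (2 * ε) = Real.sqrt 2 * Real.sqrt ε := Real.sqrt_mul (by norm_num) ε
    have hsε0 : ((Real.sqrt ε : ℝ) : ℂ) ≠ 0 :=
      Complex.ofReal_ne_zero.mpr (ne_of_gt (Real.sqrt_pos.mpr hε))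
    have hs20 : ((Real.sqrt 2 : ℝ) : ℂ) ≠ 0 :=
      Complex.ofReal_ne_zero.mpr (ne_of_gt (Real.sqrt_pos.mpr (by norm_num)))
    have hsε : ((Real.sqrt ε : ℝ) : ℂ) * ((Real.sqrt ε : ℝ) : ℂ) = (ε : ℂ) := by
      rw [← Complex.ofReal_mul, Real.mul_self_sqrt hε.le]
    have hI : Complex.I * Complex.I = -1 := Complex.I_mul_I
    rw [h2ε]
    push_cast
    field_simp
    ring_nf
    linear_combination ((ε:ℂ)^2) * hI
  have hD2 : Complex.I * ε * raiseOp ε (q t) (p t) (Q t) (P t) j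
        (fun y => deriv (fun s => φ s y) t) x
      = raiseOp ε (q t) (p t) (Q t) (P t) j (Hop ε V (φ t)) x
        + ((ε * Real.sqrt ε : ℝ) : ℂ) * α t x
          * raiseOp ε (q t) (p t) (Q t) (P t) j (φ t) x
        - ((ε ^ 2 / Real.sqrt 2 : ℝ) : ℂ) *
          ((∑ k, (starRingEnd ℂ) (Q t k j) * fderiv ℝ (α t) x (EuclideanSpace.single k 1))
            * φ t x) := by
    have h1 := HagAux.raiseOp_const_mul ε (q t) (p t) (Q t) (P t) j (Complex.I * ε)
      (fun y => deriv (fun s => φ s y) t) hψd x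
    have h2 : (fun y => Complex.I * (ε : ℂ) * deriv (fun s => φ s y) t)
        = fun y => Hop ε V (φ t) y + ((ε * Real.sqrt ε : ℝ) : ℂ) * (α t y * φ t y) := by
      funext y; rw [hφ t y]; ring
    rw [← h1, h2,
      HagAux.raiseOp_add ε (q t) (p t) (Q t) (P t) j (Hop ε V (φ t))
        (fun y => ((ε * Real.sqrt ε : ℝ) : ℂ) * (α t y * φ t y))
        ((HagAux.Hop_contDiff ε V hVsm (φ t) (hφt t)).differentiable (by simp))
        ((hαt.mul (hφd t)).const_mul _) x,
      HagAux.raiseOp_const_mul ε (q t) (p t) (Q t) (P t) j _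
        (fun y => α t y * φ t y) (hαt.mul (hφd t)) x,
      HagAux.raiseOp_mul ε (q t) (p t) (Q t) (P t) j (α t) (φ t) hαt (hφd t) x]
    linear_combination
      ((∑ k, (starRingEnd ℂ) (Q t k j) *
        fderiv ℝ (α t) x (EuclideanSpace.single k 1)) * φ t x) * hnum
  have hqd : ∀ k : Fin d, HasDerivAt (fun s => q s k) (deriv (fun s => q s k) t) t :=
    fun k => (((hqs k).differentiable (by simp)) t).hasDerivAt
  have hpd : ∀ k : Fin d, HasDerivAt (fun s => ((p s k : ℝ) : ℂ))
      ((deriv (fun s => p s k) t : ℝ) : ℂ) t :=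
    fun k => ((((hps k).differentiable (by simp)) t).hasDerivAt).ofReal_comp
  have hxq : ∀ k : Fin d, HasDerivAt (fun s => ((x k - q s k : ℝ) : ℂ))
      ((-(deriv (fun s => q s k) t) : ℝ) : ℂ) t :=
    fun k => (HasDerivAt.const_sub (x k) (hqd k)).ofReal_comp
  have hPd : ∀ k : Fin d, HasDerivAt (fun s => star (P s k j))
      (star (deriv (fun s => P s k j) t)) t :=
    fun k => ((((hPs k j).differentiable (by simp)) t).hasDerivAt).star
  have hQd : ∀ k : Fin d, HasDerivAt (fun s => star (Q s k j))
      (star (deriv (fun s => Q s k j) t)) t :=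
    fun k => ((((hQs k j).differentiable (by simp)) t).hasDerivAt).star
  have hu : HasDerivAt (fun s => φ s x) (deriv (fun s => φ s x) t) t :=
    (HagAux0.hasDerivAt_slice hFd t x).differentiableAt.hasDerivAt
  have hw : ∀ k : Fin d, HasDerivAt
      (fun s => fderiv ℝ (φ s) x (EuclideanSpace.single k 1))
      (fderiv ℝ (fun y => deriv (fun s => φ s y) t) x (EuclideanSpace.single k 1)) t :=
    fun k => HagAux0.hasDerivAt_fderiv_swap hφreg t x (EuclideanSpace.single k 1)
  have hT1 := fun k : Fin d => ((hPd k).mul (hxq k)).mul hu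
  have hT2 := fun k : Fin d => (hQd k).mul
    (((hw k).const_mul (-Complex.I * (ε : ℂ))).sub ((hpd k).mul hu))
  have hbig := ((HasDerivAt.fun_sum (fun k (_ : k ∈ Finset.univ) => hT1 k)).sub
    (HasDerivAt.fun_sum (fun k (_ : k ∈ Finset.univ) => hT2 k))).const_mul
    (Complex.I / (Real.sqrt (2 * ε) : ℂ))
  have hT1f := fun k : Fin d => ((hPd k).mul (hxq k)).mul (hasDerivAt_const t (φ t x))
  have hT2f := fun k : Fin d => (hQd k).mul
    (((hasDerivAt_const t (fderiv ℝ (φ t) x (EuclideanSpace.single k 1))).const_mul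
      (-Complex.I * (ε : ℂ))).sub ((hpd k).mul (hasDerivAt_const t (φ t x))))
  have hfix := ((HasDerivAt.fun_sum (fun k (_ : k ∈ Finset.univ) => hT1f k)).sub
    (HasDerivAt.fun_sum (fun k (_ : k ∈ Finset.univ) => hT2f k))).const_mul
    (Complex.I / (Real.sqrt (2 * ε) : ℂ))
  have hbig2 : HasDerivAt (fun s => raiseOp ε (q s) (p s) (Q s) (P s) j (φ s) x) _ t := hbig
  have hfix2 : HasDerivAt (fun s => raiseOp ε (q s) (p s) (Q s) (P s) j (φ t) x) _ t := hfix
  have hder : deriv (fun s => raiseOp ε (q s) (p s) (Q s) (P s) j (φ s) x) t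
      = deriv (fun s => raiseOp ε (q s) (p s) (Q s) (P s) j (φ t) x) t
        + raiseOp ε (q t) (p t) (Q t) (P t) j (fun y => deriv (fun s => φ s y) t) x := by
    rw [hbig2.deriv, hfix2.deriv]
    simp only [raiseOp, momOp, starRingEnd_apply, Pi.mul_apply, Pi.sub_apply]
    simp only [Finset.mul_sum, ← Finset.sum_sub_distrib, ← Finset.sum_add_distrib]
    refine Finset.sum_congr rfl fun k _ => ?_
    ring
  have main : Complex.I * ε * deriv (fun s => raiseOp ε (q s) (p s) (Q s) (P s) j (φ s) x) t
      = Hop ε V (raiseOp ε (q t) (p t) (Q t) (P t) j (φ t)) x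
        + ((ε * Real.sqrt ε : ℝ) : ℂ) * α t x
          * raiseOp ε (q t) (p t) (Q t) (P t) j (φ t) x := by
    rw [hder]
    linear_combination hAt + hD2
  rw [deriv_const_mul_field, HagAux.Hop_const_mul ε V _
    (raiseOp ε (q t) (p t) (Q t) (P t) j (φ t))
    (HagAux.raiseOp_contDiff ε (q t) (p t) (Q t) (P t) j (φ t) (hφt t)) x]
  linear_combination (((Real.sqrt ((n j : ℝ) + 1) : ℝ) : ℂ))⁻¹ * main

end
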